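/- arXiv:2402.07420 — 2 statements merged into one kernel-verified Lean document; each statement's English description precedes it below -/
import Mathlib

section
/- Existence of a Satisfying Path Planner: If every edge of the domain D is undirected (i.e., (i,j) ∈ E implies (j,i) ∈ E), then for any k, ℓ, and m, there exists a path planner A that satisfies (k, ℓ, m)-Anonymity, i.e., A returns a (k, ℓ, m)-Anonymized Path for every (k, ℓ, m)-Anonymizable Tuple in D. -/
open scoped ENNReal

structure Domain (N : Type*) where
  E : N → N → Prop
  T : Set N
  c : N → N → ℝ
  c_nonneg : ∀ a b, 0 ≤ c a b
  v : N → Set N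

variable {N : Type*}

/-- A path is a nonempty sequence of nodes where consecutive nodes are joined by edges. -/
def IsPath (D : Domain N) (π : List N) : Prop :=
  π ≠ [] ∧ π.Chain' D.E

def startsAt (π : List N) (a : N) : Prop := π.head? = some a

def endsAt (π : List N) (b : N) : Prop := π.getLast? = some b

/-- A path covers a node `n` if some node on the path sees `n`. -/
def Covers (D : Domain N) (π : List N) (n : N) : Prop :=
  ∃ x ∈ π, n ∈ D.v x

/-- The cost of a path: the sum of the costs of its consecutive edges. -/
def cost (D : Domain N) : List N → ℝ
  | [] => 0
  | [_] => 0
  | a :: b :: rest => D.c a b + cost D (b :: rest)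

/-- Shortest-path distance (`∞` if there is no path). -/
noncomputable def spDist (D : Domain N) (a b : N) : ℝ≥0∞ :=
  ⨅ (π : List N) (_ : IsPath D π ∧ startsAt π a ∧ endsAt π b),
    ENNReal.ofReal (cost D π)

/-- A path planner maps (domain, start, goal, transit point) to a path or Failure (`none`). -/
abbrev Planner (N : Type*) := Domain N → N → N → N → Option (List N)

/-- A feasible solution to a PPVT: a path from `s` to `g` covering `t`. -/
def Feasible (D : Domain N) (s g t : N) (π : List N) : Prop :=
  IsPath D π ∧ startsAt π s ∧ endsAt π g ∧ Covers D π t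

/-- A planner is sound if any returned path is a feasible PPVT solution. -/
def SoundPlanner (D : Domain N) (A : Planner N) : Prop :=
  ∀ s g t π, A D s g t = some π → Feasible D s g t π

/-- The prefix `π|_m` consisting of the first `m` nodes (the whole path if `m = ∞`
or `m` exceeds the length). -/
def takeE (m : ℕ∞) (π : List N) : List N :=
  if m = ⊤ then π else π.take m.toNat

/-- `A (D, s, g, t)` is a `(k, ℓ, m)`-Anonymized Path: there is a set `S` of at least `k`
transit candidates, pairwise shortest-path distance `≥ ℓ`, whose planner outputs all agree
with the output for `t` on the first `m` nodes. -/
def IsAnonymized (D : Domain N) (A : Planner N) (s g t : N)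
    (k : ℕ) (ℓ : ℝ) (m : ℕ∞) : Prop :=
  ∃ (π : List N) (S : Finset N), A D s g t = some π ∧ ↑S ⊆ D.T ∧
    k ≤ S.card ∧
    (∀ i ∈ S, ∀ j ∈ S, i ≠ j → ENNReal.ofReal ℓ ≤ spDist D i j) ∧
    (∀ t' ∈ S, ∃ π', A D s g t' = some π' ∧ takeE m π' = takeE m π)

/-- `(D, s, g, t)` is a `(k, ℓ, m)`-Anonymizable Tuple: some sound planner outputs a
`(k, ℓ, m)`-Anonymized Path for it. -/
def IsAnonymizableTuple (D : Domain N) (s g t : N) (k : ℕ) (ℓ : ℝ) (m : ℕ∞) : Prop :=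
  t ∈ D.T ∧ s ≠ t ∧ g ≠ t ∧
    ∃ A : Planner N, SoundPlanner D A ∧ IsAnonymized D A s g t k ℓ m

/-- A planner satisfies `(k, ℓ, m)`-Anonymity for `D` if it returns a `(k, ℓ, m)`-Anonymized
Path for every `(k, ℓ, m)`-Anonymizable Tuple in `D`. -/
def SatisfiesAnonymity (D : Domain N) (A : Planner N) (k : ℕ) (ℓ : ℝ) (m : ℕ∞) : Prop :=
  ∀ s g t, IsAnonymizableTuple D s g t k ℓ m → IsAnonymized D A s g t k ℓ m

def Undirected (D : Domain N) : Prop := ∀ i j, D.E i j → D.E j i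

/-- Concatenation of two paths sharing an endpoint (the shared node appears once). -/
def concatP (πa πb : List N) : List N := πa ++ πb.tail

/-!
Undirectedness lets us merge any two paths from `s` to `g` into one that contains both: follow
the first to `g`, return to `s` along the reverse of the second, then follow the second to `g`.
As there are finitely many nodes, this gives, for each `s` and `g`, a single path from `s` to `g`
covering every transit node that is covered by some path from `s` to `g` at all. The planner
returning this path for every such transit node is sound, and every member of a set witnessing
anonymity for some sound planner is such a transit node, so all of them receive the same path.
-/

variable {D : Domain N}

def IsPathFromTo (D : Domain N) (a b : N) (π : List N) : Prop :=
  IsPath D π ∧ startsAt π a ∧ endsAt π b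

theorem feasible_iff {s g t : N} {π : List N} :
    Feasible D s g t π ↔ IsPathFromTo D s g π ∧ Covers D π t := by
  simp only [Feasible, IsPathFromTo, and_assoc]

theorem Covers.mono {π π' : List N} {t : N} (h : Covers D π t) (hsub : π ⊆ π') :
    Covers D π' t :=
  let ⟨x, hx, hxt⟩ := h; ⟨x, hsub hx, hxt⟩

theorem subset_concatP_left (P Q : List N) : P ⊆ concatP P Q :=
  List.subset_append_left P Q.tail

theorem subset_concatP_right {P Q : List N} {b : N} (hP : endsAt P b) (hQ : startsAt Q b) :
    Q ⊆ concatP P Q := by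
  obtain ⟨Q', rfl⟩ : ∃ Q', Q = b :: Q' := List.head?_eq_some_iff.mp hQ
  rintro x (_ | ⟨_, hx⟩)
  · exact List.mem_append_left _ (List.mem_of_getLast? hP)
  · exact List.mem_append_right _ hx

namespace IsPathFromTo

variable {a b c : N} {P Q : List N}

theorem concatP (hP : IsPathFromTo D a b P) (hQ : IsPathFromTo D b c Q) :
    IsPathFromTo D a c (concatP P Q) := by
  obtain ⟨⟨hPne, hPchain⟩, hPa, hPb⟩ := hP
  obtain ⟨⟨-, hQchain⟩, hQb, hQc⟩ := hQ
  obtain ⟨Q', rfl⟩ : ∃ Q', Q = b :: Q' := List.head?_eq_some_iff.mp hQb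
  obtain ⟨hlink, hQ'chain⟩ := List.isChain_cons.mp hQchain
  refine ⟨⟨by simp [_root_.concatP, hPne], hPchain.append hQ'chain ?_⟩, ?_, ?_⟩
  · intro x hx y hy
    obtain rfl : x = b := by simp_all [endsAt]
    exact hlink y hy
  · simpa [startsAt, _root_.concatP, List.head?_append, hPne] using hPa
  · cases Q' <;> simp_all [endsAt, _root_.concatP, List.getLast?_append]

theorem reverse (hund : Undirected D) (hP : IsPathFromTo D a b P) :
    IsPathFromTo D b a P.reverse :=
  ⟨⟨by simpa using hP.1.1, List.isChain_reverse.mpr (hP.1.2.imp fun _ _ h => hund _ _ h)⟩,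
    by rw [startsAt, List.head?_reverse]; exact hP.2.2,
    by rw [endsAt, List.getLast?_reverse]; exact hP.2.1⟩

end IsPathFromTo

theorem exists_isPathFromTo_superset (hund : Undirected D) {s g : N} {P Q : List N}
    (hP : IsPathFromTo D s g P) (hQ : IsPathFromTo D s g Q) :
    ∃ R, IsPathFromTo D s g R ∧ P ⊆ R ∧ Q ⊆ R := by
  have hPQ := hP.concatP (hQ.reverse hund)
  refine ⟨concatP (concatP P Q.reverse) Q, hPQ.concatP hQ, ?_,
    subset_concatP_right hPQ.2.2 hQ.2.1⟩
  exact List.Subset.trans (subset_concatP_left _ _) (subset_concatP_left _ _)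

theorem exists_isPathFromTo_covers_finset (hund : Undirected D) {s g : N} {ts : Finset N}
    (hts : ts.Nonempty) (hfeas : ∀ t ∈ ts, ∃ π, Feasible D s g t π) :
    ∃ P, IsPathFromTo D s g P ∧ ∀ t ∈ ts, Covers D P t := by
  induction hts using Finset.Nonempty.cons_induction with
  | singleton t =>
    obtain ⟨π, hfeasπ⟩ := hfeas t (Finset.mem_singleton_self t)
    obtain ⟨hπ, hcov⟩ := feasible_iff.mp hfeasπ
    exact ⟨π, hπ, by simpa using hcov⟩
  | cons t ts ht hts ih =>
    obtain ⟨P, hP, hPcov⟩ := ih fun t' ht' => hfeas t' (Finset.mem_cons_of_mem ht')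
    obtain ⟨π, hfeasπ⟩ := hfeas t (Finset.mem_cons_self t ts)
    obtain ⟨hπ, hπcov⟩ := feasible_iff.mp hfeasπ
    obtain ⟨R, hR, hPR, hπR⟩ := exists_isPathFromTo_superset hund hP hπ
    refine ⟨R, hR, fun t' ht' => ?_⟩
    rcases Finset.mem_cons.mp ht' with rfl | ht'
    · exact hπcov.mono hπR
    · exact (hPcov t' ht').mono hPR

def IsUniversalPath (D : Domain N) (s g : N) (P : List N) : Prop :=
  IsPathFromTo D s g P ∧ ∀ t, (∃ π, Feasible D s g t π) → Covers D P t

theorem exists_isUniversalPath [Finite N] (hund : Undirected D) {s g t : N}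
    (h : ∃ π, Feasible D s g t π) : ∃ P, IsUniversalPath D s g P := by
  let feasibleTransits := (Set.toFinite {t | ∃ π, Feasible D s g t π}).toFinset
  obtain ⟨P, hP, hcov⟩ :=
    exists_isPathFromTo_covers_finset hund (s := s) (g := g) (ts := feasibleTransits)
    ⟨t, by simpa [feasibleTransits] using h⟩ (by simp [feasibleTransits])
  exact ⟨P, hP, fun t' ht' => hcov t' (by simpa [feasibleTransits] using ht')⟩

open Classical in
noncomputable def universalPlanner : Planner N := fun D s g t =>
  if ∃ π, Feasible D s g t π then some (Classical.epsilon (IsUniversalPath D s g)) else none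

theorem universalPlanner_of_feasible {s g t : N} (h : ∃ π, Feasible D s g t π) :
    universalPlanner D s g t = some (Classical.epsilon (IsUniversalPath D s g)) := by
  classical
  simp only [universalPlanner, if_pos h]

theorem soundPlanner_universalPlanner [Finite N] (hund : Undirected D) :
    SoundPlanner D universalPlanner := by
  classical
  intro s g t π hπ
  by_cases h : ∃ π, Feasible D s g t π
  · rw [universalPlanner_of_feasible h, Option.some_inj] at hπ
    obtain ⟨hP, hcov⟩ : IsUniversalPath D s g π :=
      hπ ▸ Classical.epsilon_spec (exists_isUniversalPath hund h)
    exact feasible_iff.mpr ⟨hP, hcov t h⟩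
  · simp [universalPlanner, h] at hπ

theorem IsAnonymized.of_const_on_feasible {A₀ A : Planner N} {s g t : N} {k : ℕ} {ℓ : ℝ}
    {m : ℕ∞} {P : List N} (hA₀ : SoundPlanner D A₀) (h : IsAnonymized D A₀ s g t k ℓ m)
    (hA : ∀ t', (∃ π, Feasible D s g t' π) → A D s g t' = some P) :
    IsAnonymized D A s g t k ℓ m := by
  obtain ⟨π, S, hπ, hST, hcard, hdist, hagree⟩ := h
  refine ⟨P, S, hA t ⟨π, hA₀ _ _ _ _ hπ⟩, hST, hcard, hdist, fun t' ht' => ?_⟩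
  obtain ⟨π', hπ', -⟩ := hagree t' ht'
  exact ⟨P, hA t' ⟨π', hA₀ _ _ _ _ hπ'⟩, rfl⟩

/-- Existence of a Satisfying Path Planner: if every edge of `D` is
undirected then for any `k`, `ℓ`, `m` there is a (sound) path planner satisfying
`(k, ℓ, m)`-Anonymity. -/
theorem stmt2 [Fintype N] (D : Domain N) (hund : Undirected D)
    (k : ℕ) (ℓ : ℝ) (m : ℕ∞) :
    ∃ A : Planner N, SoundPlanner D A ∧ SatisfiesAnonymity D A k ℓ m := by
  refine ⟨universalPlanner, soundPlanner_universalPlanner hund, ?_⟩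
  rintro s g t ⟨-, -, -, A₀, hA₀, h⟩
  exact h.of_const_on_feasible hA₀ fun _ => universalPlanner_of_feasible
end

section
/- Admissibility of the Tunnel Heuristic: For the Watchman Route Problem with Targets, the heuristic h_tunnel, defined on a search state (n, U) by h_tunnel(n, U) = max_{u ∈ U} min_{q ∈ v⁻¹(u)} d(n, q) + min_{u ∈ U} min_{q ∈ v⁻¹(u)} d(q, g) when U is nonempty, and h_tunnel(n, ∅) = d(n, g), is a lower bound on the cost of any path from n to g that covers all nodes of U. -/
/-! For every `u ∈ U` the path passes through some `q ∈ v⁻¹(u)`; splitting it at `q` gives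
`d(n, q) + d(q, g) ≤ cost π`, which bounds the `u`-term of the maximum plus the minimum over
all of `U`. Since `+` distributes over suprema in `ℝ≥0∞`, this bounds the whole heuristic. -/

open scoped ENNReal

variable {N : Type*}

/-- `v⁻¹(u)`: the set of nodes from which `u` is visible. -/
def vinv (D : Domain N) (u : N) : Set N := {q | u ∈ D.v q}

open Classical in
/-- The Tunnel Heuristic for the WRPT. -/
noncomputable def htunnel (D : Domain N) (g n : N) (U : Set N) : ℝ≥0∞ :=
  if U = ∅ then spDist D n g
  else (⨆ u ∈ U, ⨅ q ∈ vinv D u, spDist D n q) +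
       (⨅ u ∈ U, ⨅ q ∈ vinv D u, spDist D q g)

lemma cost_nonneg (D : Domain N) : ∀ π, 0 ≤ cost D π
  | [] | [_] => le_rfl
  | a :: b :: π => add_nonneg (D.c_nonneg a b) (cost_nonneg D (b :: π))

lemma cost_append_cons (D : Domain N) (x : N) (l₂ : List N) :
    ∀ l₁ : List N, cost D (l₁ ++ x :: l₂) = cost D (l₁ ++ [x]) + cost D (x :: l₂)
  | [] => by simp [cost]
  | [a] => by simp [cost]
  | a :: b :: l₁ => by
    simp only [List.cons_append, cost] at *
    rw [← List.cons_append, cost_append_cons D x l₂ (b :: l₁), List.cons_append, add_assoc]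

lemma spDist_le_ofReal_cost {D : Domain N} {a b : N} {π : List N} (hπ : IsPath D π)
    (ha : startsAt π a) (hb : endsAt π b) : spDist D a b ≤ ENNReal.ofReal (cost D π) :=
  iInf₂_le π ⟨hπ, ha, hb⟩

lemma spDist_add_spDist_le_of_mem {D : Domain N} {a b x : N} {π : List N} (hπ : IsPath D π)
    (ha : startsAt π a) (hb : endsAt π b) (hx : x ∈ π) :
    spDist D a x + spDist D x b ≤ ENNReal.ofReal (cost D π) := by
  obtain ⟨l₁, l₂, rfl⟩ := List.append_of_mem hx
  have hpre : IsPath D (l₁ ++ [x]) := ⟨by simp, hπ.2.prefix ⟨l₂, by simp⟩⟩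
  have hsuf : IsPath D (x :: l₂) := ⟨by simp, hπ.2.suffix ⟨l₁, rfl⟩⟩
  have hstart : startsAt (l₁ ++ [x]) a := by
    cases l₁ <;> simpa [startsAt] using ha
  have hend : endsAt (x :: l₂) b := by
    simpa [endsAt, List.getLast?_append] using hb
  calc spDist D a x + spDist D x b
      ≤ ENNReal.ofReal (cost D (l₁ ++ [x])) + ENNReal.ofReal (cost D (x :: l₂)) :=
        add_le_add (spDist_le_ofReal_cost hpre hstart (by simp [endsAt]))
          (spDist_le_ofReal_cost hsuf (by simp [startsAt]) hend)
    _ = ENNReal.ofReal (cost D (l₁ ++ x :: l₂)) := by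
        rw [← ENNReal.ofReal_add (cost_nonneg D _) (cost_nonneg D _), ← cost_append_cons]

/-- Admissibility of the Tunnel Heuristic: `h_tunnel(n, U)` is a lower
bound on the cost of any path from `n` to `g` covering every node of `U`. -/
theorem stmt7 (D : Domain N) (g n : N) (U : Set N) :
    ∀ π : List N, IsPath D π → startsAt π n → endsAt π g →
      (∀ u ∈ U, Covers D π u) →
      htunnel D g n U ≤ ENNReal.ofReal (cost D π) := by
  intro π hπ hn hg hcov
  by_cases hU : U = ∅
  · rw [htunnel, if_pos hU]
    exact spDist_le_ofReal_cost hπ hn hg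
  rw [htunnel, if_neg hU, ENNReal.biSup_add (Set.nonempty_iff_ne_empty.mpr hU)]
  refine iSup₂_le fun u hu => ?_
  obtain ⟨q, hqπ, hq⟩ := hcov u hu
  calc (⨅ q ∈ vinv D u, spDist D n q) + ⨅ u ∈ U, ⨅ q ∈ vinv D u, spDist D q g
      ≤ spDist D n q + spDist D q g :=
        add_le_add (biInf_le _ hq) ((biInf_le _ hu).trans (biInf_le _ hq))
    _ ≤ ENNReal.ofReal (cost D π) := spDist_add_spDist_le_of_mem hπ hn hg hqπ
end
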